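/- Let g : [0,1] → ℝ be twice continuously differentiable, let o, m_o ∈ ℕ with o, m_o ≥ 1 and m := o·m_o. Then Σ_{i=1}^{m_o} ( (1/o)·Σ_{t=1}^o g(ξ_{(i−1)o+t, m}) − g(ξ_{i, m_o}) )² ≤ ‖g''‖_∞² / (576·m_o³), where ‖g''‖_∞ := sup_{x∈[0,1]} |g''(x)|. -/

import Mathlib

open Real

/-- The midpoint grid points `ξ_{j,n} = (2j−1)/(2n)`. -/
noncomputable def gridPt (n j : ℕ) : ℝ := (2 * (j : ℝ) - 1) / (2 * (n : ℝ))

/-!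
Each coarse midpoint `ξ_{i,m_o}` is the mean of the `o` fine midpoints of its cell, so when `g` is
expanded to first order about `ξ_{i,m_o}` the linear terms cancel in the average, and what is left
is at most `B/2` times the mean squared offset, `B (o² - 1) / (24 o² m_o²) ≤ B / (24 m_o²)`.
Squaring and summing over the `m_o` cells gives `B² / (576 m_o³)`.
-/

open Finset

lemma ConvexOn.add_mul_sub_le_of_hasDerivWithinAt {S : Set ℝ} {f : ℝ → ℝ} {f' c x : ℝ}
    (hfc : ConvexOn ℝ S f) (hc : c ∈ S) (hx : x ∈ S) (hf' : HasDerivWithinAt f f' S c) :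
    f c + f' * (x - c) ≤ f x := by
  rcases lt_trichotomy c x with hcx | rfl | hxc
  · have h := hfc.le_slope_of_hasDerivWithinAt hc hx hcx hf'
    rw [slope_def_field, le_div_iff₀ (sub_pos.2 hcx)] at h
    linarith
  · simp
  · have h := hfc.slope_le_of_hasDerivWithinAt hx hc hxc hf'
    rw [slope_def_field, div_le_iff₀ (sub_pos.2 hxc)] at h
    linarith

lemma taylor_remainder_one_ge_of_neg_le_deriv2 {D : Set ℝ} (hD : Convex ℝ D)
    {f f' f'' : ℝ → ℝ} {B : ℝ}
    (hf : ∀ x ∈ D, HasDerivWithinAt f (f' x) D x)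
    (hf' : ∀ x ∈ D, HasDerivWithinAt f' (f'' x) D x)
    (hB : ∀ x ∈ D, -B ≤ f'' x) {c x : ℝ} (hc : c ∈ D) (hx : x ∈ D) :
    -(B / 2 * (x - c) ^ 2) ≤ f x - f c - f' c * (x - c) := by
  have hquad : ∀ s t, HasDerivWithinAt (fun t ↦ B / 2 * t ^ 2) (B * t) s t := fun s t ↦
    ((hasDerivAt_pow 2 t).const_mul (B / 2)).hasDerivWithinAt.congr_deriv (by ring)
  have hlin : ∀ s t, HasDerivWithinAt (fun t ↦ B * t) B s t :=
    fun s t ↦ by simpa using (hasDerivWithinAt_id t s).const_mul B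
  -- `f + B t² / 2` has nonnegative second derivative, so it lies above its tangent at `c`.
  have hconvex : ConvexOn ℝ D (fun t ↦ f t + B / 2 * t ^ 2) := by
    refine convexOn_of_hasDerivWithinAt2_nonneg hD (f' := fun t ↦ f' t + B * t)
      (f'' := fun t ↦ f'' t + B) (fun t ht ↦ ?_) (fun t ht ↦ ?_) (fun t ht ↦ ?_)
      (fun t ht ↦ ?_)
    · exact ((hf t ht).add (hquad D t)).continuousWithinAt
    · exact ((hf t (interior_subset ht)).mono interior_subset).add (hquad _ t)
    · exact ((hf' t (interior_subset ht)).mono interior_subset).add (hlin _ t)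
    · linarith [hB t (interior_subset ht)]
  have := hconvex.add_mul_sub_le_of_hasDerivWithinAt hc hx ((hf c hc).add (hquad D c))
  linarith

lemma abs_taylor_remainder_one_le {D : Set ℝ} (hD : Convex ℝ D)
    {f f' f'' : ℝ → ℝ} {B : ℝ}
    (hf : ∀ x ∈ D, HasDerivWithinAt f (f' x) D x)
    (hf' : ∀ x ∈ D, HasDerivWithinAt f' (f'' x) D x)
    (hB : ∀ x ∈ D, |f'' x| ≤ B) {c x : ℝ} (hc : c ∈ D) (hx : x ∈ D) :
    |f x - f c - f' c * (x - c)| ≤ B / 2 * (x - c) ^ 2 := by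
  have lower := taylor_remainder_one_ge_of_neg_le_deriv2 hD hf hf'
    (fun t ht ↦ (abs_le.1 (hB t ht)).1) hc hx
  have upper := taylor_remainder_one_ge_of_neg_le_deriv2 hD (f := -f) (f' := -f') (f'' := -f'')
    (fun t ht ↦ (hf t ht).neg) (fun t ht ↦ (hf' t ht).neg)
    (fun t ht ↦ neg_le_neg (abs_le.1 (hB t ht)).2) hc hx
  simp only [Pi.neg_apply] at upper
  exact abs_le.2 ⟨lower, by linarith⟩

lemma abs_sum_sub_card_mul_le_of_sum_sub_eq_zero {ι : Type*} {D : Set ℝ} (hD : Convex ℝ D)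
    {f f' f'' : ℝ → ℝ} {B : ℝ}
    (hf : ∀ x ∈ D, HasDerivWithinAt f (f' x) D x)
    (hf' : ∀ x ∈ D, HasDerivWithinAt f' (f'' x) D x)
    (hB : ∀ x ∈ D, |f'' x| ≤ B) {s : Finset ι} {x : ι → ℝ} {c : ℝ} (hc : c ∈ D)
    (hx : ∀ t ∈ s, x t ∈ D) (hmean : ∑ t ∈ s, (x t - c) = 0) :
    |∑ t ∈ s, f (x t) - #s * f c| ≤ B / 2 * ∑ t ∈ s, (x t - c) ^ 2 := by
  have hsplit : ∑ t ∈ s, f (x t) - #s * f c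
      = ∑ t ∈ s, (f (x t) - f c - f' c * (x t - c)) := by
    rw [sum_sub_distrib, sum_sub_distrib, ← mul_sum, hmean, sum_const, nsmul_eq_mul]
    ring
  calc |∑ t ∈ s, f (x t) - #s * f c|
      ≤ ∑ t ∈ s, |f (x t) - f c - f' c * (x t - c)| := hsplit ▸ abs_sum_le_sum_abs _ _
    _ ≤ ∑ t ∈ s, B / 2 * (x t - c) ^ 2 :=
        sum_le_sum fun t ht ↦ abs_taylor_remainder_one_le hD hf hf' hB hc (hx t ht)
    _ = B / 2 * ∑ t ∈ s, (x t - c) ^ 2 := (mul_sum _ _ _).symm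

lemma sum_Icc_two_mul_sub_one_sub (n : ℕ) (a : ℝ) :
    ∑ t ∈ Icc 1 n, (2 * (t : ℝ) - 1 - a) = n ^ 2 - n * a := by
  induction n with
  | zero => simp
  | succ n ih => rw [sum_Icc_succ_top (by omega), ih]; push_cast; ring

lemma sum_Icc_sq_two_mul_sub_one_sub (n : ℕ) (a : ℝ) :
    ∑ t ∈ Icc 1 n, (2 * (t : ℝ) - 1 - a) ^ 2
      = (4 * n ^ 3 - n) / 3 - 2 * n ^ 2 * a + n * a ^ 2 := by
  induction n with
  | zero => simp
  | succ n ih => rw [sum_Icc_succ_top (by omega), ih]; push_cast; ring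

lemma gridPt_mem_Icc {n j : ℕ} (hj : 1 ≤ j) (hjn : j ≤ n) :
    gridPt n j ∈ Set.Icc (0 : ℝ) 1 := by
  have hj' : (1 : ℝ) ≤ j := by exact_mod_cast hj
  have hjn' : (j : ℝ) ≤ n := by exact_mod_cast hjn
  unfold gridPt
  constructor
  · apply div_nonneg <;> linarith
  · rw [div_le_one (by linarith)]; linarith

lemma gridPt_mul_sub_one_mul_add {o n i : ℕ} (ho : o ≠ 0) (hn : n ≠ 0) (hi : 1 ≤ i)
    (t : ℕ) :
    gridPt (o * n) ((i - 1) * o + t) = gridPt n i + (2 * t - 1 - o) / (2 * (o * n)) := by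
  unfold gridPt
  push_cast [Nat.cast_sub hi]
  field_simp
  ring

lemma abs_average_gridPt_mul_sub_gridPt_le {g g' g'' : ℝ → ℝ} {B : ℝ}
    (hg : ∀ x ∈ Set.Icc (0 : ℝ) 1, HasDerivWithinAt g (g' x) (Set.Icc 0 1) x)
    (hg' : ∀ x ∈ Set.Icc (0 : ℝ) 1, HasDerivWithinAt g' (g'' x) (Set.Icc 0 1) x)
    (hB : ∀ x ∈ Set.Icc (0 : ℝ) 1, |g'' x| ≤ B) {o n i : ℕ} (ho : o ≠ 0)
    (hi : i ∈ Icc 1 n) :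
    |(1 / (o : ℝ)) * ∑ t ∈ Icc 1 o, g (gridPt (o * n) ((i - 1) * o + t)) - g (gridPt n i)|
      ≤ B / (24 * n ^ 2) := by
  obtain ⟨hi1, hin⟩ := mem_Icc.1 hi
  have hn : n ≠ 0 := by omega
  have hB0 : 0 ≤ B := (abs_nonneg _).trans (hB 0 (by simp))
  set c := gridPt n i
  set x : ℕ → ℝ := fun t ↦ gridPt (o * n) ((i - 1) * o + t)
  have hoffset : ∀ t, x t - c = (2 * t - 1 - o) / (2 * (o * n)) := fun t ↦ by
    simp only [x, c, gridPt_mul_sub_one_mul_add ho hn hi1]; ring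
  have hnodes : ∀ t ∈ Icc 1 o, x t ∈ Set.Icc (0 : ℝ) 1 := by
    intro t ht
    obtain ⟨ht1, hto⟩ := mem_Icc.1 ht
    refine gridPt_mem_Icc (by omega) ?_
    calc (i - 1) * o + t ≤ (i - 1) * o + o := by omega
      _ = i * o := by rw [Nat.sub_one_mul, Nat.sub_add_cancel (Nat.le_mul_of_pos_left o hi1)]
      _ ≤ o * n := by rw [mul_comm]; exact Nat.mul_le_mul_left o hin
  have hmean : ∑ t ∈ Icc 1 o, (x t - c) = 0 := by
    simp only [hoffset, ← sum_div, sum_Icc_two_mul_sub_one_sub]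
    ring
  have hvar : ∑ t ∈ Icc 1 o, (x t - c) ^ 2 = (o ^ 2 - 1) / (12 * o * n ^ 2) := by
    simp only [hoffset, div_pow, ← sum_div, sum_Icc_sq_two_mul_sub_one_sub]
    field_simp
    ring
  have hquad := abs_sum_sub_card_mul_le_of_sum_sub_eq_zero (convex_Icc 0 1) hg hg' hB
    (gridPt_mem_Icc hi1 hin) hnodes hmean
  rw [hvar, Nat.card_Icc, Nat.add_sub_cancel] at hquad
  calc |(1 / (o : ℝ)) * ∑ t ∈ Icc 1 o, g (x t) - g c|
      = |(1 / o) * (∑ t ∈ Icc 1 o, g (x t) - o * g c)| := by field_simp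
    _ = (1 / o) * |∑ t ∈ Icc 1 o, g (x t) - o * g c| := by
        rw [abs_mul, abs_of_pos (by positivity)]
    _ ≤ (1 / o) * (B / 2 * ((o ^ 2 - 1) / (12 * o * n ^ 2))) := by gcongr
    _ = B / (24 * n ^ 2) * (1 - 1 / o ^ 2) := by field_simp; ring
    _ ≤ B / (24 * n ^ 2) :=
        mul_le_of_le_one_right (by positivity) (sub_le_self _ (by positivity))

theorem stmt_16_general (g g' g'' : ℝ → ℝ)
    (hg' : ∀ x ∈ Set.Icc (0:ℝ) 1, HasDerivWithinAt g (g' x) (Set.Icc 0 1) x)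
    (hg'' : ∀ x ∈ Set.Icc (0:ℝ) 1, HasDerivWithinAt g' (g'' x) (Set.Icc 0 1) x)
    (B : ℝ) (hB : ∀ x ∈ Set.Icc (0:ℝ) 1, |g'' x| ≤ B)
    (o mo : ℕ) (ho : 1 ≤ o) (m : ℕ) (hm : m = o * mo) :
    (∑ i ∈ Finset.Icc 1 mo,
        ((1 / (o : ℝ)) * (∑ t ∈ Finset.Icc 1 o, g (gridPt m ((i - 1) * o + t)))
          - g (gridPt mo i)) ^ 2)
      ≤ B ^ 2 / (576 * (mo : ℝ) ^ 3) := by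
  subst hm
  have hcell : ∀ i ∈ Icc 1 mo,
      ((1 / (o : ℝ)) * (∑ t ∈ Icc 1 o, g (gridPt (o * mo) ((i - 1) * o + t)))
        - g (gridPt mo i)) ^ 2 ≤ (B / (24 * mo ^ 2)) ^ 2 := fun i hi ↦ by
    rw [← sq_abs]
    exact pow_le_pow_left₀ (abs_nonneg _)
      (abs_average_gridPt_mul_sub_gridPt_le hg' hg'' hB (by omega) hi) 2
  calc _ ≤ ∑ i ∈ Icc 1 mo, (B / (24 * (mo : ℝ) ^ 2)) ^ 2 := sum_le_sum hcell
    _ = B ^ 2 / (576 * (mo : ℝ) ^ 3) := by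
      rw [sum_const, Nat.card_Icc, Nat.add_sub_cancel, nsmul_eq_mul]
      -- for `mo = 0` both sides vanish, as `x / 0 = 0`
      rcases eq_or_ne (mo : ℝ) 0 with h | h
      · simp [h]
      · field_simp
        ring

/-- Let `g : [0,1] → ℝ` be twice continuously differentiable
(with first and second derivatives `g'` and `g''` on `[0,1]`), let `o, m_o ≥ 1` and
`m = o·m_o`.  Then, with `B` any bound on `|g''|` on `[0,1]`
(in the paper, `B = ‖g''‖_∞`):
`Σ_{i=1}^{m_o} ((1/o) Σ_{t=1}^o g(ξ_{(i−1)o+t,m}) − g(ξ_{i,m_o}))² ≤ B²/(576·m_o³)`. -/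
theorem stmt_16 (g g' g'' : ℝ → ℝ)
    (hg' : ∀ x ∈ Set.Icc (0:ℝ) 1, HasDerivWithinAt g (g' x) (Set.Icc 0 1) x)
    (hg'' : ∀ x ∈ Set.Icc (0:ℝ) 1, HasDerivWithinAt g' (g'' x) (Set.Icc 0 1) x)
    (hcont : ContinuousOn g'' (Set.Icc 0 1))
    (B : ℝ) (hB : ∀ x ∈ Set.Icc (0:ℝ) 1, |g'' x| ≤ B)
    (o mo : ℕ) (ho : 1 ≤ o) (hmo : 1 ≤ mo) (m : ℕ) (hm : m = o * mo) :
    (∑ i ∈ Finset.Icc 1 mo,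
        ((1 / (o : ℝ)) * (∑ t ∈ Finset.Icc 1 o, g (gridPt m ((i - 1) * o + t)))
          - g (gridPt mo i)) ^ 2)
      ≤ B ^ 2 / (576 * (mo : ℝ) ^ 3) :=
  stmt_16_general g g' g'' hg' hg'' B hB o mo ho m hm
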